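/- arXiv:1712.02499 — 7 statements merged into one kernel-verified Lean document; each statement's English description precedes it below -/
import Mathlib

section
/- Fix j, k, m, n ∈ ℕ with j ≤ k and m + n - k ≤ j. If m = j + k - n, then ∑_{i=0}^{j} (C(j,i) C(k,i) / C(n,i)) (-1)^i i^m = (-1)^{n-j-k} · j! · k! / n!, and if m < j + k - n then this sum equals 0. -/
/-!
For `i ≤ k ≤ n`, `C(k,i) / C(n,i) = k!/n! · (n-i)(n-i-1)⋯(k-i+1)`, and this falling factorial
is a polynomial in `i` of degree `n - k` with leading coefficient `(-1)^(n-k)`. Hence the sum is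
`k!/n!` times an alternating binomial sum `∑ (-1)^i C(j,i) P(i)` of a polynomial `P` of degree
`m + n - k ≤ j`. Such a sum is `(-1)^j` times the `j`-th forward difference of `P` at `0`, that is
`(-1)^j j!` times the coefficient of `X^j` in `P`: the leading coefficient `(-1)^(n-k)` when
`m + n = j + k`, and `0` when the degree is smaller.
-/

open Finset Polynomial Nat fwdDiff

theorem Nat.cast_choose_div_cast_choose (K : Type*) [Field K] [CharZero K] {i k n : ℕ}
    (hik : i ≤ k) (hkn : k ≤ n) :
    (k.choose i : K) / n.choose i = k ! / n ! * (n - i).descFactorial (n - k) := by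
  have hfac := Nat.factorial_mul_descFactorial (n := n - i) (k := n - k) (by omega)
  rw [show n - i - (n - k) = k - i by omega] at hfac
  rw [Nat.cast_choose K hik, Nat.cast_choose K (hik.trans hkn), ← hfac]
  push_cast
  field_simp [Nat.factorial_ne_zero]

namespace Polynomial

section CommRing

variable {R : Type*} [CommRing R]

theorem fwdDiff_iter_eval_eq_factorial_mul_coeff {P : R[X]} {n : ℕ} (hP : P.natDegree ≤ n)
    (x : R) : Δ_[1] ^[n] P.eval x = n ! * P.coeff n := by
  rcases hP.lt_or_eq with hlt | rfl
  · simp [fwdDiff_iter_eq_zero_of_degree_lt hlt, coeff_eq_zero_of_natDegree_lt hlt]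
  · simp [fwdDiff_iter_degree_eq_factorial, mul_comm]

theorem sum_range_neg_one_pow_mul_choose_mul_eval {P : R[X]} {n : ℕ} (hP : P.natDegree ≤ n) :
    ∑ i ∈ range (n + 1), (-1) ^ i * n.choose i * P.eval (i : R) =
      (-1) ^ n * n ! * P.coeff n := by
  rw [mul_assoc, ← fwdDiff_iter_eval_eq_factorial_mul_coeff hP 0, fwdDiff_iter_eq_sum_shift,
    mul_sum]
  refine sum_congr rfl fun i hi ↦ ?_
  have hsign : (-1 : R) ^ n * (-1) ^ (n - i) = (-1) ^ i := by
    rw [← pow_add]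
    have hin : i ≤ n := Nat.lt_succ_iff.mp (mem_range.mp hi)
    exact neg_one_pow_congr (by rw [Nat.even_add, Nat.even_sub hin]; tauto)
  simp only [zsmul_eq_mul, zero_add, nsmul_one]
  push_cast
  linear_combination (-(n.choose i : R) * P.eval (i : R)) * hsign

theorem natDegree_C_sub_X [Nontrivial R] (a : R) : (C a - X).natDegree = 1 := by
  rw [← neg_sub, natDegree_neg, natDegree_X_sub_C]

theorem leadingCoeff_C_sub_X (a : R) : (C a - X).leadingCoeff = -1 := by
  rw [← neg_sub, leadingCoeff_neg, (monic_X_sub_C a).leadingCoeff]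

end CommRing

section NoZeroDivisors

variable {R : Type*} [CommRing R] [NoZeroDivisors R] [Nontrivial R]

theorem natDegree_descPochhammer_comp_C_sub_X (d : ℕ) (a : R) :
    ((descPochhammer R d).comp (C a - X)).natDegree = d := by
  rw [natDegree_comp, descPochhammer_natDegree, natDegree_C_sub_X, mul_one]

theorem coeff_descPochhammer_comp_C_sub_X_self (d : ℕ) (a : R) :
    ((descPochhammer R d).comp (C a - X)).coeff d = (-1) ^ d := calc
  _ = ((descPochhammer R d).comp (C a - X)).leadingCoeff := by
    rw [leadingCoeff, natDegree_descPochhammer_comp_C_sub_X]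
  _ = (-1) ^ d := by
    rw [leadingCoeff_comp (by simp [natDegree_C_sub_X]), (monic_descPochhammer R d).leadingCoeff,
      descPochhammer_natDegree, leadingCoeff_C_sub_X, one_mul]

end NoZeroDivisors

end Polynomial

/-- Interpolation identity for the combinatorial sums appearing in the
series expansion of the multiplicative convolution. -/
theorem stmt_1 (j k m n : ℕ) (hjk : j ≤ k) (hkn : k ≤ n) (hm : m + n ≤ j + k) :
    (m + n = j + k →
      ∑ i ∈ range (j + 1),
        ((j.choose i : ℝ) * (k.choose i) / (n.choose i)) * (-1) ^ i * (i : ℝ) ^ m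
        = (-1) ^ (j + k - n) * (j.factorial : ℝ) * (k.factorial) / (n.factorial)) ∧
    (m + n < j + k →
      ∑ i ∈ range (j + 1),
        ((j.choose i : ℝ) * (k.choose i) / (n.choose i)) * (-1) ^ i * (i : ℝ) ^ m = 0) := by
  set Q : ℝ[X] := (descPochhammer ℝ (n - k)).comp (C (n : ℝ) - X)
  have hterm : ∀ i ∈ range (j + 1),
      ((j.choose i : ℝ) * (k.choose i) / (n.choose i)) * (-1) ^ i * (i : ℝ) ^ m
        = k ! / n ! * ((-1) ^ i * j.choose i * (Q * X ^ m).eval (i : ℝ)) := by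
    intro i hi
    have hik : i ≤ k := (Nat.lt_succ_iff.mp (mem_range.mp hi)).trans hjk
    rw [mul_div_assoc, Nat.cast_choose_div_cast_choose ℝ hik hkn,
      ← descPochhammer_eval_eq_descFactorial, Nat.cast_sub (hik.trans hkn)]
    simp only [Q, eval_mul, eval_comp, eval_sub, eval_C, eval_X, eval_pow]
    ring
  have hdeg : (Q * X ^ m).natDegree ≤ n - k + m :=
    natDegree_mul_le.trans_eq (by rw [natDegree_descPochhammer_comp_C_sub_X, natDegree_X_pow])
  have hsum : ∑ i ∈ range (j + 1),
      ((j.choose i : ℝ) * (k.choose i) / (n.choose i)) * (-1) ^ i * (i : ℝ) ^ m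
        = k ! / n ! * ((-1) ^ j * j ! * (Q * X ^ m).coeff j) := by
    rw [sum_congr rfl hterm, ← mul_sum,
      sum_range_neg_one_pow_mul_choose_mul_eval (hdeg.trans (by omega))]
  refine ⟨fun hj ↦ ?_, fun hj ↦ ?_⟩
  · have hcoeff : (Q * X ^ m).coeff j = (-1) ^ (n - k) := by
      rw [show j = n - k + m by omega, coeff_mul_X_pow, coeff_descPochhammer_comp_C_sub_X_self]
    have hsign : (-1 : ℝ) ^ j * (-1) ^ (n - k) = (-1) ^ (j + k - n) := by
      rw [← pow_add]
      exact neg_one_pow_congr (by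
        rw [Nat.even_add, Nat.even_sub hkn, Nat.even_sub (show n ≤ j + k by omega), Nat.even_add]
        tauto)
    rw [hsum, hcoeff, ← hsign]
    ring
  · rw [hsum, coeff_eq_zero_of_natDegree_lt (hdeg.trans_lt (by omega)), mul_zero, mul_zero]
end

section
/- For any polynomial p ∈ ℂ[x] of degree at most j (with j ∈ ℕ) and q ∈ ℂ not a root of unity with q ≠ 0, the coefficient of t^j in p satisfies: (-1)^j q^{-binom(j,2)} · [t^j]p(t) = ∑_{i=0}^{j} p((i)_{q^{-1}}) · (-1)^i q^{binom(i,2)} / ((i)_q! · (j-i)_q!), where (i)_q := (1-q^i)/(1-q) and (i)_q! := ∏_{m=1}^{i} (m)_q. -/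
open Finset

/-- The `q`-integer `(i)_q = (1 - q^i)/(1 - q)`. -/
noncomputable def qint (q : ℂ) (i : ℕ) : ℂ := (1 - q ^ i) / (1 - q)

/-- The `q`-factorial `(i)_q! = (1)_q (2)_q ⋯ (i)_q`. -/
noncomputable def qfact (q : ℂ) (i : ℕ) : ℂ := ∏ m ∈ Icc 1 i, qint q m

/-!
The nodes `xᵢ = (i)_{q⁻¹}`, `0 ≤ i ≤ j`, are distinct, so Lagrange interpolation gives
`[t^j] p = ∑ᵢ p(xᵢ) / ∏_{k ≠ i} (xᵢ - xₖ)`. Since `xᵢ - xₖ = q^{-k} (i - k)_{q⁻¹}` for `k ≤ i`,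
the denominator is `± q^{-(binom(i,2) + i(j-i))} (i)_{q⁻¹}! (j-i)_{q⁻¹}!`, and
`(n)_{q⁻¹}! = q^{-binom(n,2)} (n)_q!` turns this into the stated weights.
-/

open Polynomial

lemma Nat.choose_two_add (a b : ℕ) : (a + b).choose 2 = a.choose 2 + b.choose 2 + a * b := by
  induction b with
  | zero => simp
  | succ b ih =>
    rw [← add_assoc, Nat.choose_succ_succ', Nat.choose_succ_succ' b, ih]
    simp only [Nat.choose_one_right]
    ring

lemma qfact_eq_prod_range (q : ℂ) (n : ℕ) : qfact q n = ∏ k ∈ range n, qint q (k + 1) := by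
  rw [qfact, ← Ico_add_one_right_eq_Icc, prod_Ico_eq_prod_range]
  exact prod_congr rfl fun k _ => by rw [Nat.add_comm]

lemma qfact_succ (q : ℂ) (n : ℕ) : qfact q (n + 1) = qfact q n * qint q (n + 1) := by
  rw [qfact, qfact, prod_Icc_succ_top (Nat.le_add_left 1 n)]

lemma qint_sub_qint (q : ℂ) {k i : ℕ} (hk : k ≤ i) :
    qint q i - qint q k = q ^ k * qint q (i - k) := by
  rw [qint, qint, qint, ← Nat.add_sub_cancel' hk, pow_add, Nat.add_sub_cancel_left]
  ring

lemma qint_ne_zero {q : ℂ} (hq : ∀ n : ℕ, 0 < n → q ^ n ≠ 1) {n : ℕ} (hn : 0 < n) :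
    qint q n ≠ 0 :=
  div_ne_zero (sub_ne_zero.mpr (hq n hn).symm)
    (sub_ne_zero.mpr (by simpa using (hq 1 one_pos).symm))

lemma qint_injective {q : ℂ} (hq0 : q ≠ 0) (hq : ∀ n : ℕ, 0 < n → q ^ n ≠ 1) :
    Function.Injective (qint q) :=
  .of_lt_imp_ne fun a b hab h => by
    have := qint_sub_qint q hab.le
    rw [h, sub_self] at this
    exact mul_ne_zero (pow_ne_zero a hq0) (qint_ne_zero hq (Nat.sub_pos_of_lt hab)) this.symm

lemma qint_inv_succ {q : ℂ} (hq0 : q ≠ 0) (n : ℕ) :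
    qint q⁻¹ (n + 1) = (q ^ n)⁻¹ * qint q (n + 1) := by
  rcases eq_or_ne q 1 with rfl | hq1
  · simp [qint]
  · have hq1' : 1 - q⁻¹ ≠ 0 := sub_ne_zero.mpr (inv_ne_one.mpr hq1).symm
    rw [qint, qint, inv_pow]
    field_simp
    ring

lemma qfact_inv {q : ℂ} (hq0 : q ≠ 0) (n : ℕ) :
    qfact q⁻¹ n = (q ^ n.choose 2)⁻¹ * qfact q n := by
  induction n with
  | zero => simp [qfact]
  | succ n ih =>
    rw [qfact_succ, qfact_succ, ih, qint_inv_succ hq0, Nat.choose_succ_succ', Nat.choose_one_right,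
      pow_add, mul_inv]
    ring

lemma prod_range_qint_sub (q : ℂ) (i : ℕ) :
    ∏ k ∈ range i, (qint q i - qint q k) = q ^ i.choose 2 * qfact q i := by
  rw [prod_congr rfl fun k hk => qint_sub_qint q (mem_range.mp hk).le, prod_mul_distrib,
    prod_pow_eq_pow_sum, sum_range_id, ← Nat.choose_two_right, qfact_eq_prod_range,
    ← prod_range_reflect]
  refine congrArg _ (prod_congr rfl fun k hk => ?_)
  rw [mem_range] at hk
  congr 1
  omega

lemma prod_Ico_qint_sub (q : ℂ) {i j : ℕ} (hij : i ≤ j) :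
    ∏ k ∈ Ico (i + 1) (j + 1), (qint q i - qint q k) =
      (-1) ^ (j - i) * q ^ (i * (j - i)) * qfact q (j - i) := by
  have hlen : j + 1 - (i + 1) = j - i := by omega
  have hterm : ∀ k ∈ range (j - i),
      qint q i - qint q (i + 1 + k) = -1 * q ^ i * qint q (k + 1) := fun k _ => by
    rw [← neg_sub, qint_sub_qint q (by omega), add_assoc, Nat.add_sub_cancel_left,
      Nat.add_comm 1]
    ring
  rw [prod_Ico_eq_prod_range, hlen, prod_congr rfl hterm, prod_mul_distrib, prod_mul_distrib,
    prod_const, prod_const, card_range, pow_mul, qfact_eq_prod_range]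

lemma prod_erase_range_qint_sub (q : ℂ) {i j : ℕ} (hij : i ≤ j) :
    ∏ k ∈ (range (j + 1)).erase i, (qint q i - qint q k) =
      (-1) ^ (j - i) * q ^ (i.choose 2 + i * (j - i)) * (qfact q i * qfact q (j - i)) := by
  have hsplit : (range (j + 1)).erase i = range i ∪ Ico (i + 1) (j + 1) := by
    ext k
    simp only [mem_erase, mem_range, mem_union, mem_Ico]
    omega
  have hdisj : Disjoint (range i) (Ico (i + 1) (j + 1)) :=
    disjoint_left.mpr fun k hk hk' => by simp only [mem_range, mem_Ico] at hk hk'; omega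
  rw [hsplit, prod_union hdisj, prod_range_qint_sub, prod_Ico_qint_sub q hij, pow_add]
  ring

lemma prod_erase_range_qint_inv_sub {q : ℂ} (hq0 : q ≠ 0) {i j : ℕ} (hij : i ≤ j) :
    ∏ k ∈ (range (j + 1)).erase i, (qint q⁻¹ i - qint q⁻¹ k) =
      (-1) ^ (j - i) * (q ^ (j.choose 2 + i.choose 2))⁻¹ * (qfact q i * qfact q (j - i)) := by
  have hexp : i.choose 2 + i * (j - i) + i.choose 2 + (j - i).choose 2 =
      j.choose 2 + i.choose 2 := by
    rw [← Nat.add_sub_cancel' hij, Nat.choose_two_add, Nat.add_sub_cancel_left]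
    ring
  rw [prod_erase_range_qint_sub _ hij, qfact_inv hq0, qfact_inv hq0, ← hexp, inv_pow]
  simp only [pow_add, mul_inv]
  ring

/-- q-Lagrange interpolation: the top coefficient of a polynomial of degree at
most `j` can be recovered from its values at the points `(i)_{q⁻¹}`. -/
theorem stmt_2 (j : ℕ) (q : ℂ) (hq0 : q ≠ 0) (hq : ∀ n : ℕ, 0 < n → q ^ n ≠ 1)
    (p : Polynomial ℂ) (hp : p.natDegree ≤ j) :
    (-1) ^ j * (q ^ j.choose 2)⁻¹ * p.coeff j =
      ∑ i ∈ range (j + 1),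
        p.eval (qint q⁻¹ i) * (-1) ^ i * q ^ i.choose 2 / (qfact q i * qfact q (j - i)) := by
  have hinj : Set.InjOn (qint q⁻¹) (range (j + 1)) :=
    (qint_injective (inv_ne_zero hq0) fun n hn => by
      simpa only [inv_pow, inv_ne_one] using hq n hn).injOn
  have hdeg : p.degree < #(range (j + 1)) := by
    rw [card_range]
    exact degree_le_natDegree.trans_lt (by exact_mod_cast Nat.lt_succ_of_le hp)
  have hcoeff := Lagrange.coeff_eq_sum hinj hdeg
  rw [card_range, Nat.add_sub_cancel] at hcoeff
  rw [hcoeff, mul_sum]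
  refine sum_congr rfl fun i hi => ?_
  have hij : i ≤ j := Nat.lt_succ_iff.mp (mem_range.mp hi)
  have hsign : (-1 : ℂ) ^ j = (-1) ^ (j - i) * (-1) ^ i := by
    rw [← pow_add, Nat.sub_add_cancel hij]
  rw [prod_erase_range_qint_inv_sub hq0 hij, hsign, pow_add]
  field_simp
end

section
/- Let b > 0, f ∈ ℝ[x] of degree at most n-1, and g ∈ ℝ[x] of degree at most n. Then f ⊞_b^n g = f ⊞_b^{n-1} (Δ_b g), where p ⊞_b^m r := ∑_{k=0}^{m} (Δ_b^k p)(x) · (Δ_b^{m-k} r)(0) and (Δ_b h)(x) = (h(x) - h(x-b))/b. -/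
open Polynomial Finset

/-- The backward finite difference operator `(Δ_b f)(x) = (f(x) - f(x-b))/b`. -/
noncomputable def deltab (b : ℝ) (f : Polynomial ℝ) : Polynomial ℝ :=
  Polynomial.C b⁻¹ * (f - f.comp (Polynomial.X - Polynomial.C b))

/-- The `b`-additive (finite difference) convolution
`p ⊞_b^m r = ∑_{k=0}^m (Δ_b^k p)(x) · (Δ_b^{m-k} r)(0)`. -/
noncomputable def bconv (b : ℝ) (m : ℕ) (p r : Polynomial ℝ) : Polynomial ℝ :=
  ∑ k ∈ range (m + 1),
    (deltab b)^[k] p * Polynomial.C (((deltab b)^[m - k] r).eval 0)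

/-! Peeling off the last summand of `f ⊞_b^n g` leaves `f ⊞_b^{n-1} (Δ_b g)`, because
`Δ_b^{n-k} g = Δ_b^{n-1-k} (Δ_b g)` for `k < n`; the last summand carries the factor `Δ_b^n f`,
which vanishes since `Δ_b` lowers the degree of a polynomial by at least one. -/

theorem natDegree_sub_comp_X_sub_C_le {R : Type*} [CommRing R] (f : R[X]) (b : R) :
    (f - f.comp (X - C b)).natDegree ≤ f.natDegree - 1 := by
  have hshift : f.comp (X - C b) = taylor (-b) f := by
    rw [taylor_apply, sub_eq_add_neg, C_neg]
  rw [hshift]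
  refine natDegree_le_pred ((natDegree_sub_le _ _).trans (by rw [natDegree_taylor, max_self])) ?_
  have hlead := leadingCoeff_taylor (r := -b) (f := f)
  rw [leadingCoeff, leadingCoeff, natDegree_taylor] at hlead
  rw [coeff_sub, hlead, sub_self]

theorem natDegree_deltab_le (b : ℝ) (f : ℝ[X]) :
    (deltab b f).natDegree ≤ f.natDegree - 1 :=
  (natDegree_C_mul_le _ _).trans (natDegree_sub_comp_X_sub_C_le f b)

theorem iterate_deltab_succ_eq_zero (b : ℝ) {m : ℕ} {f : ℝ[X]} (hf : f.natDegree ≤ m) :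
    (deltab b)^[m + 1] f = 0 := by
  induction m generalizing f with
  | zero =>
    rw [eq_C_of_natDegree_le_zero hf]
    simp [deltab]
  | succ m ih =>
    rw [Function.iterate_succ_apply]
    exact ih ((natDegree_deltab_le b f).trans (by omega))

theorem bconv_succ (b : ℝ) (m : ℕ) (p r : ℝ[X]) :
    bconv b (m + 1) p r = bconv b m p (deltab b r) + (deltab b)^[m + 1] p * C (r.eval 0) := by
  rw [bconv, sum_range_succ, Nat.sub_self, Function.iterate_zero_apply, bconv]
  congr 1
  refine sum_congr rfl fun k hk => ?_
  rw [Nat.sub_add_comm (Nat.lt_succ_iff.mp (mem_range.mp hk)), Function.iterate_succ_apply]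

theorem stmt_6_general (b : ℝ) (n : ℕ) (hn : 1 ≤ n) (f g : Polynomial ℝ)
    (hf : f.natDegree ≤ n - 1) :
    bconv b n f g = bconv b (n - 1) f (deltab b g) := by
  obtain ⟨m, rfl⟩ := Nat.exists_eq_add_of_le' hn
  rw [Nat.add_sub_cancel] at hf ⊢
  rw [bconv_succ, iterate_deltab_succ_eq_zero b hf, zero_mul, add_zero]

/-- Recursive identity: `f ⊞_b^n g = f ⊞_b^{n-1} (Δ_b g)` when `deg f ≤ n-1`. -/
theorem stmt_6 (b : ℝ) (hb : 0 < b) (n : ℕ) (hn : 1 ≤ n) (f g : Polynomial ℝ)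
    (hf : f.natDegree ≤ n - 1) (hg : g.natDegree ≤ n) :
    bconv b n f g = bconv b (n - 1) f (deltab b g) :=
  stmt_6_general b n hn f g hf
end

section
/- Let b > 0 and let g ∈ ℝ[x] have degree at most n, written in the rising factorial basis as g = ∑_{k=0}^{n} a_k · x(x+b)⋯(x+(k-1)b). Then (Δ*_{b,n} g)(x + b) = ∑_{k=0}^{n-1} (n-k) a_k · x(x+b)⋯(x+(k-1)b), where (Δ*_{b,n} g)(x) := n·g(x-b) - (x-b)·(Δ_b g)(x) and (Δ_b g)(x) = (g(x)-g(x-b))/b. -/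
open Polynomial Finset

/-- The "polar"-type operator `(Δ*_{b,n} g)(x) = n g(x-b) - (x-b)(Δ_b g)(x)`. -/
noncomputable def deltastar (b : ℝ) (n : ℕ) (g : Polynomial ℝ) : Polynomial ℝ :=
  Polynomial.C (n : ℝ) * g.comp (Polynomial.X - Polynomial.C b) -
    (Polynomial.X - Polynomial.C b) * deltab b g

/-- The rising factorial polynomial `ν_b^k(x) = x(x+b)⋯(x+(k-1)b)`. -/
noncomputable def rising (b : ℝ) (k : ℕ) : Polynomial ℝ :=
  ∏ j ∈ range k, (Polynomial.X + Polynomial.C (j * b))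

/-! Rising factorials are to `Δ_b` what powers are to the derivative:
`Δ_b ν^{k+1} = (k+1) ν^k`. Together with `ν^{k+1}(x - b) = (x - b) ν^k(x)` this gives
`Δ*_{b,n} ν^k = (n - k) ν^k(x - b)`, which the shift by `b` turns into `(n - k) ν^k`;
the top term `k = n` drops out, and linearity does the rest. -/

lemma rising_succ (b : ℝ) (k : ℕ) : rising b (k + 1) = rising b k * (X + C (k * b)) :=
  prod_range_succ _ k

lemma rising_succ_comp_X_sub_C (b : ℝ) (k : ℕ) :
    (rising b (k + 1)).comp (X - C b) = (X - C b) * rising b k := by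
  rw [rising, Polynomial.prod_comp, prod_range_succ', rising, mul_comm]
  congr 1
  · simp
  · refine prod_congr rfl fun j _ => ?_
    simp only [add_comp, X_comp, C_comp, Nat.cast_succ, add_mul, one_mul, C_add]
    ring

lemma deltab_rising_succ {b : ℝ} (hb : b ≠ 0) (k : ℕ) :
    deltab b (rising b (k + 1)) = C ((k : ℝ) + 1) * rising b k := by
  have hdiff : rising b (k + 1) - (rising b (k + 1)).comp (X - C b) =
      C (((k : ℝ) + 1) * b) * rising b k := by
    rw [rising_succ_comp_X_sub_C, rising_succ, C_mul, C_mul, C_add, C_1]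
    ring
  rw [deltab, hdiff, ← mul_assoc, ← C_mul, mul_comm _ b, ← mul_assoc, inv_mul_cancel₀ hb,
    one_mul]

lemma deltastar_rising_comp_X_add_C {b : ℝ} (hb : b ≠ 0) (n k : ℕ) :
    (deltastar b n (rising b k)).comp (X + C b) = C ((n : ℝ) - k) * rising b k := by
  cases k with
  | zero => simp [deltastar, deltab, rising]
  | succ k =>
    have hfactor : deltastar b n (rising b (k + 1)) =
        C ((n : ℝ) - (k + 1 : ℕ)) * (rising b (k + 1)).comp (X - C b) := by
      rw [deltastar, deltab_rising_succ hb, rising_succ_comp_X_sub_C, Nat.cast_succ, C_sub,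
        C_add, C_1]
      ring
    have hX : (X - C b).comp (X + C b) = (X : ℝ[X]) := by simp
    rw [hfactor, mul_comp, C_comp, comp_assoc, hX, comp_X]

lemma deltastar_sum (b : ℝ) (n : ℕ) {ι : Type*} (s : Finset ι) (f : ι → ℝ[X]) :
    deltastar b n (∑ i ∈ s, f i) = ∑ i ∈ s, deltastar b n (f i) := by
  simp only [deltastar, deltab, Polynomial.sum_comp, ← sum_sub_distrib, mul_sum]

lemma deltastar_C_mul (b : ℝ) (n : ℕ) (c : ℝ) (p : ℝ[X]) :
    deltastar b n (C c * p) = C c * deltastar b n p := by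
  rw [deltastar, deltastar, deltab, deltab, mul_comp, C_comp]
  ring

theorem stmt_8_general (b : ℝ) (hb : 0 < b) (n : ℕ) (g : Polynomial ℝ)
    (a : ℕ → ℝ)
    (ha : g = ∑ k ∈ range (n + 1), Polynomial.C (a k) * rising b k) :
    (deltastar b n g).comp (Polynomial.X + Polynomial.C b) =
      ∑ k ∈ range n, Polynomial.C (((n : ℝ) - k) * a k) * rising b k := by
  have hterm (k : ℕ) : (deltastar b n (C (a k) * rising b k)).comp (X + C b) =
      C (((n : ℝ) - k) * a k) * rising b k := by
    rw [deltastar_C_mul, mul_comp, C_comp, deltastar_rising_comp_X_add_C hb.ne', ← mul_assoc,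
      ← C_mul, mul_comm (a k)]
  rw [ha, deltastar_sum, Polynomial.sum_comp, sum_range_succ]
  simp only [hterm, sub_self, zero_mul, C_0, add_zero]

/-- After a shift by `b`, the operator `Δ*_{b,n}` acts diagonally on the rising
factorial basis: if `g = ∑_{k=0}^n a_k ν_b^k`, then
`(Δ*_{b,n} g)(x+b) = ∑_{k=0}^{n-1} (n-k) a_k ν_b^k`. -/
theorem stmt_8 (b : ℝ) (hb : 0 < b) (n : ℕ) (g : Polynomial ℝ)
    (hg : g.natDegree ≤ n) (a : ℕ → ℝ)
    (ha : g = ∑ k ∈ range (n + 1), Polynomial.C (a k) * rising b k) :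
    (deltastar b n g).comp (Polynomial.X + Polynomial.C b) =
      ∑ k ∈ range n, Polynomial.C (((n : ℝ) - k) * a k) * rising b k :=
  stmt_8_general b hb n g a ha
end

section
/- Let f, g ∈ ℝ[x] with f'g − fg' ≤ 0 pointwise on ℝ (write f ≪ g), and suppose both f and g are monic of the same degree with all real roots. Then the largest real root of f is at most the largest real root of g. -/
open Polynomial

/-- `f ≪ g`: the Wronskian condition `f'g - fg' ≤ 0` everywhere on `ℝ`. -/
def interlacesBelow (f g : Polynomial ℝ) : Prop :=
  ∀ x : ℝ, (Polynomial.derivative f).eval x * g.eval x -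
    f.eval x * (Polynomial.derivative g).eval x ≤ 0

/-- A real polynomial has all real roots when its root multiset is as large as
its degree. -/
def realRooted (f : Polynomial ℝ) : Prop := Multiset.card f.roots = f.natDegree

/-
If some root `x` of `f` lay beyond every root of `g`, then `g > 0` on `[x, ∞)`, so there
`(f / g)' = (f'g - fg') / g² ≤ 0` and `f / g` decreases from its value `0` at `x`. Hence `f ≤ 0`
on `[x, ∞)`, which is impossible for a monic polynomial of positive degree.
-/

theorem antitoneOn_div_of_interlacesBelow {f g : ℝ[X]} (hfg : interlacesBelow f g) {s : Set ℝ}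
    (hs : Convex ℝ s) (hg : ∀ t ∈ s, g.eval t ≠ 0) :
    AntitoneOn (fun t => f.eval t / g.eval t) s := by
  have hderiv : ∀ t ∈ s, HasDerivAt (fun t => f.eval t / g.eval t)
      (((derivative f).eval t * g.eval t - f.eval t * (derivative g).eval t) / g.eval t ^ 2) t :=
    fun t ht => (f.hasDerivAt t).div (g.hasDerivAt t) (hg t ht)
  refine antitoneOn_of_hasDerivWithinAt_nonpos hs
    (fun t ht => (hderiv t ht).continuousAt.continuousWithinAt)
    (fun t ht => (hderiv t (interior_subset ht)).hasDerivWithinAt) fun t _ => ?_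
  exact div_nonpos_of_nonpos_of_nonneg (hfg t) (sq_nonneg _)

theorem eval_nonpos_of_interlacesBelow_of_isRoot {f g : ℝ[X]} (hfg : interlacesBelow f g)
    (hgm : g.Monic) {x : ℝ} (hx : f.IsRoot x) (hg : ∀ y ∈ g.roots, y < x) {t : ℝ} (ht : x ≤ t) :
    f.eval t ≤ 0 := by
  have hgpos : ∀ u ∈ Set.Ici x, 0 < g.eval u := fun u hu =>
    zero_lt_eval_of_roots_lt_of_leadingCoeff_nonneg
      (fun y hy => (hg y ((mem_roots hgm.ne_zero).2 hy)).trans_le hu) (by simp [hgm.leadingCoeff])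
  have hdecr := antitoneOn_div_of_interlacesBelow hfg (convex_Ici x)
    (fun u hu => (hgpos u hu).ne') Set.self_mem_Ici ht ht
  have hquot : f.eval t / g.eval t ≤ 0 := by simpa [hx.eq_zero] using hdecr
  simpa using (div_le_iff₀ (hgpos t ht)).1 hquot

theorem stmt_9_general (f g : Polynomial ℝ) (hfm : f.Monic) (hgm : g.Monic)
    (hll : interlacesBelow f g) :
    ∀ x ∈ f.roots, ∃ y ∈ g.roots, x ≤ y := by
  intro x hx
  by_contra! hg
  have hroot : f.IsRoot x := isRoot_of_mem_roots hx
  have htop : Filter.Tendsto (fun t => f.eval t) Filter.atTop Filter.atTop :=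
    f.tendsto_atTop_of_leadingCoeff_nonneg (degree_pos_of_root hfm.ne_zero hroot)
      (by simp [hfm.leadingCoeff])
  obtain ⟨t, hft, hxt⟩ :=
    ((htop.eventually_gt_atTop 0).and (Filter.eventually_ge_atTop x)).exists
  exact (eval_nonpos_of_interlacesBelow_of_isRoot hll hgm hroot hg hxt).not_gt hft

/-- If `f ≪ g` with `f, g` monic real-rooted of the same degree `≥ 1`, then the
largest root of `f` is at most the largest root of `g`. -/
theorem stmt_9 (f g : Polynomial ℝ) (hfm : f.Monic) (hgm : g.Monic)
    (hdeg : f.natDegree = g.natDegree) (hd1 : 1 ≤ f.natDegree)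
    (hfr : realRooted f) (hgr : realRooted g) (hll : interlacesBelow f g) :
    ∀ x ∈ f.roots, ∃ y ∈ g.roots, x ≤ y :=
  stmt_9_general f g hfm hgm hll
end

section
/- Let f ∈ ℝ[x] be monic of degree n with n simple real roots α_1, ..., α_n, and let g ∈ ℝ[x] have degree at most n. Write g = c·f + ∑_{k=1}^{n} c_k · f_k where f_k(x) := f(x)/(x − α_k). Then f'g − fg' ≤ 0 on ℝ (i.e., f ≪ g) if and only if c_k ≤ 0 for all k, and g'f − gf' ≤ 0 on ℝ (i.e., g ≪ f) if and only if c_k ≥ 0 for all k. -/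
open Polynomial Finset

/-!
With `f_k = f / (x - α_k)`, the Wronskian `W(f_k, f) = f_k f' - f_k' f` equals `f_k ^ 2`, and
`W(f, f) = 0`, so by bilinearity `g'f - gf' = ∑ c_k f_k ^ 2`. Since `f_k` vanishes at every
root of `f` except `α_k`, evaluating at `α_k` isolates `c_k f_k(α_k) ^ 2` with `f_k(α_k) ≠ 0`;
hence this sum of weighted squares is nonnegative everywhere iff all `c_k ≥ 0`. For `f ≪ g`
the signs are reversed, as `W(f, g) = -W(g, f)`.
-/

namespace Polynomial

variable {R : Type*} [CommRing R]

theorem wronskian_sum_left {ι : Type*} (s : Finset ι) (p : ι → R[X]) (q : R[X]) :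
    wronskian (∑ i ∈ s, p i) q = ∑ i ∈ s, wronskian (p i) q :=
  map_sum ((wronskianBilin R).flip q) p s

theorem wronskian_C_mul_left (a : R) (p q : R[X]) :
    wronskian (C a * p) q = C a * wronskian p q := by
  simp only [wronskian, derivative_C_mul]
  ring

theorem wronskian_self_mul_X_sub_C (p : R[X]) (a : R) :
    wronskian p ((X - C a) * p) = p ^ 2 := by
  simp only [wronskian, derivative_mul, derivative_sub, derivative_X, derivative_C]
  ring

end Polynomial

namespace Lagrange

variable {R ι : Type*} [CommRing R] [DecidableEq ι]

theorem wronskian_nodal_erase_nodal (s : Finset ι) (v : ι → R) {i : ι} (hi : i ∈ s) :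
    wronskian (nodal (s.erase i) v) (nodal s v) = nodal (s.erase i) v ^ 2 := by
  rw [nodal_eq_mul_nodal_erase hi, wronskian_self_mul_X_sub_C]

theorem wronskian_C_mul_nodal_add_sum_nodal_erase (s : Finset ι) (v : ι → R) (c : R)
    (d : ι → R) :
    wronskian (C c * nodal s v + ∑ i ∈ s, C (d i) * nodal (s.erase i) v) (nodal s v) =
      ∑ i ∈ s, C (d i) * nodal (s.erase i) v ^ 2 := by
  rw [wronskian_add_left, wronskian_C_mul_left, wronskian_self_eq_zero, mul_zero, zero_add,
    wronskian_sum_left]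
  refine sum_congr rfl fun i hi => ?_
  rw [wronskian_C_mul_left, wronskian_nodal_erase_nodal s v hi]

theorem eval_nodal_erase_at_node {s : Finset ι} {v : ι → R} {i j : ι} (hj : j ∈ s)
    (hij : j ≠ i) : (nodal (s.erase i) v).eval (v j) = 0 :=
  eval_nodal_at_node (mem_erase.mpr ⟨hij, hj⟩)

theorem eval_nodal_erase_at_erased_node [IsDomain R] {s : Finset ι} {v : ι → R}
    (hv : Set.InjOn v s) {i : ι} (hi : i ∈ s) : (nodal (s.erase i) v).eval (v i) ≠ 0 :=
  eval_nodal_not_at_node fun _ hj hvij =>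
    (mem_erase.mp hj).1 (hv (mem_erase.mp hj).2 hi hvij.symm)

end Lagrange

open Lagrange

theorem forall_sum_mul_eval_nodal_erase_sq_nonneg_iff {ι : Type*} [DecidableEq ι]
    {s : Finset ι} {v : ι → ℝ} (hv : Set.InjOn v s) (d : ι → ℝ) :
    (∀ x, 0 ≤ ∑ i ∈ s, d i * (nodal (s.erase i) v).eval x ^ 2) ↔ ∀ i ∈ s, 0 ≤ d i := by
  refine ⟨fun h i hi => ?_, fun h x => sum_nonneg fun i hi => by have := h i hi; positivity⟩
  have hsingle : ∑ j ∈ s, d j * (nodal (s.erase j) v).eval (v i) ^ 2 =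
      d i * (nodal (s.erase i) v).eval (v i) ^ 2 :=
    sum_eq_single_of_mem i hi fun j _ hji => by rw [eval_nodal_erase_at_node hi hji.symm]; ring
  have hpos : 0 < (nodal (s.erase i) v).eval (v i) ^ 2 :=
    pow_two_pos_of_ne_zero (eval_nodal_erase_at_erased_node hv hi)
  have hat := h (v i)
  rw [hsingle] at hat
  exact nonneg_of_mul_nonneg_left hat hpos

theorem interlacesBelow_iff_forall_eval_wronskian_nonneg (f g : ℝ[X]) :
    interlacesBelow f g ↔ ∀ x, 0 ≤ (wronskian f g).eval x := by
  refine forall_congr' fun x => ?_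
  simp only [wronskian, eval_sub, eval_mul]
  constructor <;> intro h <;> linarith

/-- For `f` monic with `n` simple real roots `α_1, …, α_n` and
`g = c f + ∑_k c_k f_{α_k}` (with `f_{α_k} = f/(x - α_k)`), one has
`f ≪ g` iff all `c_k ≤ 0`, and `g ≪ f` iff all `c_k ≥ 0`. -/
theorem stmt_10 (n : ℕ) (α : Fin n → ℝ) (hα : Function.Injective α)
    (f g : Polynomial ℝ)
    (hf : f = ∏ k : Fin n, (Polynomial.X - Polynomial.C (α k)))
    (c : ℝ) (cc : Fin n → ℝ)
    (hg : g = Polynomial.C c * f +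
      ∑ k : Fin n, Polynomial.C (cc k) *
        ∏ j ∈ Finset.univ.erase k, (Polynomial.X - Polynomial.C (α j))) :
    (interlacesBelow f g ↔ ∀ k, cc k ≤ 0) ∧
    (interlacesBelow g f ↔ ∀ k, 0 ≤ cc k) := by
  simp only [← nodal_eq] at hf hg
  have hW := wronskian_C_mul_nodal_add_sum_nodal_erase univ α c cc
  rw [← hf, ← hg] at hW
  have hsign := forall_sum_mul_eval_nodal_erase_sq_nonneg_iff (s := univ) hα.injOn
  refine ⟨?_, ?_⟩
  · rw [interlacesBelow_iff_forall_eval_wronskian_nonneg, ← wronskian_neg_eq, hW]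
    simpa [eval_finsetSum, neg_le_neg_iff] using hsign (-cc)
  · rw [interlacesBelow_iff_forall_eval_wronskian_nonneg, hW]
    simpa [eval_finsetSum] using hsign cc
end

section
/- Let p ∈ ℂ[x] and for q > 0, q ≠ 1 define the algebra endomorphism E_q of ℂ[x] by E_q(x) = (1 − x)/(1 − q). Then the exponential polynomials [E_q(p)](q^x) converge to p(x) uniformly on compact subsets of ℂ as q → 1. -/
open Polynomial Filter Topology

/-!
With `t = log q` we have `q = e^t`, and `E_q(p)` evaluated at `q^x` is `p([x]_q)`, where
`[x]_q = (1 - e^{xt}) / (1 - e^t)`. Writing `φ(z) = (e^z - 1) / z` (with `φ 0 = 1`), this is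
`[x]_q = x φ(xt) / φ(t)`, an expression that is jointly continuous in `(t, x) ∈ ℝ × ℂ` and equals
`x` at `t = 0`. A jointly continuous family converges uniformly on compact sets, and `log q → 0`.
-/

lemma IsCompact.tendstoUniformlyOn_of_continuous_uncurry {α β E : Type*} [TopologicalSpace α]
    [TopologicalSpace β] [UniformSpace E] {f : α → β → E} {k : Set β} (hk : IsCompact k)
    (hf : Continuous f.uncurry) (a : α) : TendstoUniformlyOn f (f a) (𝓝 a) k := by
  intro u hu
  obtain ⟨v, hv, hvu⟩ :=
    hk.mem_uniformity_of_prod hf.continuousOn (Set.mem_univ a) (symm_le_uniformity hu)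
  rw [nhdsWithin_univ] at hv
  exact mem_of_superset hv fun b hb x hx => hvu b hb x hx

namespace Complex

lemma continuous_dslope_exp : Continuous (dslope exp 0) :=
  continuousOn_univ.mp <|
    (continuousOn_dslope univ_mem).mpr ⟨continuous_exp.continuousOn, differentiableAt_exp⟩

lemma mul_dslope_exp (z : ℂ) : z * dslope exp 0 z = exp z - 1 := by
  simpa using sub_smul_dslope exp 0 z

lemma dslope_exp_ofReal_ne_zero (t : ℝ) : dslope exp 0 t ≠ 0 := by
  rcases eq_or_ne t 0 with rfl | ht
  · simp [dslope_same]
  · intro h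
    have h' := mul_dslope_exp t
    rw [h, mul_zero, eq_comm, sub_eq_zero, ← ofReal_exp, ofReal_eq_one, Real.exp_eq_one_iff] at h'
    exact ht h'

end Complex

open Complex

/-- The `q`-number `[x]_q = (1 - q^x) / (1 - q)` at `q = e^t` (see `qNumber_eq`), in a form that
extends continuously to `t = 0`. -/
noncomputable def qNumber (t : ℝ) (x : ℂ) : ℂ :=
  x * dslope exp 0 (x * t) / dslope exp 0 t

lemma continuous_qNumber : Continuous (Function.uncurry qNumber) := by
  have hφ := continuous_dslope_exp
  have ht : Continuous fun tx : ℝ × ℂ => (tx.1 : ℂ) := continuous_ofReal.comp continuous_fst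
  exact (continuous_snd.mul (hφ.comp (continuous_snd.mul ht))).div (hφ.comp ht)
    fun tx => dslope_exp_ofReal_ne_zero tx.1

@[simp]
lemma qNumber_zero (x : ℂ) : qNumber 0 x = x := by
  simp [qNumber, dslope_same]

lemma qNumber_eq {t : ℝ} (ht : t ≠ 0) (x : ℂ) :
    qNumber t x = (1 - exp t)⁻¹ * (1 - exp (x * t)) := by
  have ht' : (t : ℂ) ≠ 0 := ofReal_ne_zero.mpr ht
  rw [qNumber, ← mul_div_mul_left _ _ ht', ← mul_assoc, mul_comm (t : ℂ) x, mul_dslope_exp,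
    mul_dslope_exp, div_eq_inv_mul, ← neg_sub 1 (exp t), ← neg_sub 1 (exp (x * t)), inv_neg,
    neg_mul_neg]

lemma tendstoUniformlyOn_eval_qNumber (p : ℂ[X]) {K : Set ℂ} (hK : IsCompact K) :
    TendstoUniformlyOn (fun t x => p.eval (qNumber t x)) p.eval (𝓝 0) K := by
  simpa using hK.tendstoUniformlyOn_of_continuous_uncurry
    (f := fun t x => p.eval (qNumber t x)) (p.continuous.comp continuous_qNumber) 0

/-- For the algebra endomorphism `E_q : x ↦ (1-x)/(1-q)` of `ℂ[x]`, the
exponential polynomials `[E_q(p)](q^x)` converge to `p(x)` uniformly on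
compact subsets of `ℂ` as real `q → 1` (`q > 0`, `q ≠ 1`). -/
theorem stmt_18 (p : Polynomial ℂ) (K : Set ℂ) (hK : IsCompact K) :
    TendstoUniformlyOn
      (fun (q : ℝ) (x : ℂ) =>
        (p.comp (Polynomial.C ((1 : ℂ) - (q : ℂ))⁻¹ * (1 - Polynomial.X))).eval
          (Complex.exp (x * (Real.log q : ℂ))))
      (fun x => p.eval x)
      (nhdsWithin 1 {q : ℝ | 0 < q ∧ q ≠ 1}) K := by
  have hlog : Tendsto Real.log (𝓝[{q : ℝ | 0 < q ∧ q ≠ 1}] 1) (𝓝 0) := by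
    simpa using (Real.continuousAt_log one_ne_zero).tendsto.mono_left nhdsWithin_le_nhds
  have hconv := tendstoUniformlyOn_eval_qNumber p hK
  refine TendstoUniformlyOn.congr (fun u hu => hlog.eventually (hconv u hu)) ?_
  filter_upwards [self_mem_nhdsWithin] with q ⟨hq0, hq1⟩ x _
  have hlogq : Real.log q ≠ 0 := Real.log_ne_zero_of_pos_of_ne_one hq0 hq1
  simp only [eval_comp, eval_mul, eval_C, eval_sub, eval_one, eval_X]
  rw [qNumber_eq hlogq, ← ofReal_exp, Real.exp_log hq0]
end
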